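/- Let φ1 be an alternating LTL formula and φ2 any LTL formula. Then φ1 R φ2 ≡ φ2 ∧ (Xφ1 ∨ X(φ1 R φ2)), i.e., for every alphabet Σ and every infinite word w ∈ Σ^ω, w ⊨ φ1 R φ2 if and only if w ⊨ φ2 ∧ (Xφ1 ∨ X(φ1 R φ2)). -/
import Mathlib


/-- Syntax of LTL formulae over atomic propositions `AP`. -/
inductive LTL (AP : Type) : Type
  | tt    : LTL AP
  | atom  : AP → LTL AP
  | not   : LTL AP → LTL AP
  | or    : LTL AP → LTL AP → LTL AP
  | and   : LTL AP → LTL AP → LTL AP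
  | next  : LTL AP → LTL AP
  | untl  : LTL AP → LTL AP → LTL AP

namespace LTL

/-- Derived operator `F` (eventually). -/
def F {AP : Type} (φ : LTL AP) : LTL AP := untl tt φ

/-- Derived operator `G` (always). -/
def G {AP : Type} (φ : LTL AP) : LTL AP := not (F (not φ))

/-- Derived operator `R` (release). -/
def R {AP : Type} (φ ψ : LTL AP) : LTL AP := not (untl (not φ) (not ψ))

end LTL

/-- The `k`-th suffix of an infinite word. -/
def suffix {AP : Type} (w : ℕ → Set AP) (k : ℕ) : ℕ → Set AP :=
  fun i => w (i + k)

/-- Concatenation of a finite word `u` with an infinite word `w`. -/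
def cat {AP : Type} (u : List (Set AP)) (w : ℕ → Set AP) : ℕ → Set AP :=
  fun i => if h : i < u.length then u.get ⟨i, h⟩ else w (i - u.length)

/-- Satisfaction relation `w ⊨ φ` of LTL over infinite words `w : ℕ → Set AP`. -/
def Sat {AP : Type} : LTL AP → (ℕ → Set AP) → Prop
  | .tt, _ => True
  | .atom a, w => a ∈ w 0
  | .not φ, w => ¬ Sat φ w
  | .or φ ψ, w => Sat φ w ∨ Sat ψ w
  | .and φ ψ, w => Sat φ w ∧ Sat ψ w
  | .next φ, w => Sat φ (suffix w 1)
  | .untl φ ψ, w => ∃ i, Sat ψ (suffix w i) ∧ ∀ j < i, Sat φ (suffix w j)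

/-- Pure eventuality formulae: μ ::= Fφ | μ∨μ | μ∧μ | Xμ | φUμ | μRμ | Gμ. -/
inductive PureEventuality {AP : Type} : LTL AP → Prop
  | fin (φ : LTL AP) : PureEventuality (LTL.F φ)
  | or {μ₁ μ₂ : LTL AP} : PureEventuality μ₁ → PureEventuality μ₂ →
      PureEventuality (LTL.or μ₁ μ₂)
  | and {μ₁ μ₂ : LTL AP} : PureEventuality μ₁ → PureEventuality μ₂ →
      PureEventuality (LTL.and μ₁ μ₂)
  | next {μ : LTL AP} : PureEventuality μ → PureEventuality (LTL.next μ)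
  | untl (φ : LTL AP) {μ : LTL AP} : PureEventuality μ →
      PureEventuality (LTL.untl φ μ)
  | rel {μ₁ μ₂ : LTL AP} : PureEventuality μ₁ → PureEventuality μ₂ →
      PureEventuality (LTL.R μ₁ μ₂)
  | glob {μ : LTL AP} : PureEventuality μ → PureEventuality (LTL.G μ)

/-- Pure universality formulae: ν ::= Gφ | ν∨ν | ν∧ν | Xν | νUν | φRν | Fν. -/
inductive PureUniversality {AP : Type} : LTL AP → Prop
  | glob (φ : LTL AP) : PureUniversality (LTL.G φ)
  | or {ν₁ ν₂ : LTL AP} : PureUniversality ν₁ → PureUniversality ν₂ →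
      PureUniversality (LTL.or ν₁ ν₂)
  | and {ν₁ ν₂ : LTL AP} : PureUniversality ν₁ → PureUniversality ν₂ →
      PureUniversality (LTL.and ν₁ ν₂)
  | next {ν : LTL AP} : PureUniversality ν → PureUniversality (LTL.next ν)
  | untl {ν₁ ν₂ : LTL AP} : PureUniversality ν₁ → PureUniversality ν₂ →
      PureUniversality (LTL.untl ν₁ ν₂)
  | rel (φ : LTL AP) {ν : LTL AP} : PureUniversality ν →
      PureUniversality (LTL.R φ ν)
  | fin {ν : LTL AP} : PureUniversality ν → PureUniversality (LTL.F ν)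

/-- Alternating formulae: ξ ::= Gμ | Fν | ξ∨ξ | ξ∧ξ | Xξ | φUξ | φRξ | Fξ | Gξ. -/
inductive Alternating {AP : Type} : LTL AP → Prop
  | globEv {μ : LTL AP} : PureEventuality μ → Alternating (LTL.G μ)
  | finUniv {ν : LTL AP} : PureUniversality ν → Alternating (LTL.F ν)
  | or {ξ₁ ξ₂ : LTL AP} : Alternating ξ₁ → Alternating ξ₂ →
      Alternating (LTL.or ξ₁ ξ₂)
  | and {ξ₁ ξ₂ : LTL AP} : Alternating ξ₁ → Alternating ξ₂ →
      Alternating (LTL.and ξ₁ ξ₂)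
  | next {ξ : LTL AP} : Alternating ξ → Alternating (LTL.next ξ)
  | untl (φ : LTL AP) {ξ : LTL AP} : Alternating ξ → Alternating (LTL.untl φ ξ)
  | rel (φ : LTL AP) {ξ : LTL AP} : Alternating ξ → Alternating (LTL.R φ ξ)
  | fin {ξ : LTL AP} : Alternating ξ → Alternating (LTL.F ξ)
  | glob {ξ : LTL AP} : Alternating ξ → Alternating (LTL.G ξ)

lemma suffix_suffix {AP : Type} (w : ℕ → Set AP) (k i : ℕ) :
    suffix (suffix w k) i = suffix w (i + k) := by
  funext j; simp [suffix]; ring_nf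

lemma suffix_zero {AP : Type} (w : ℕ → Set AP) : suffix w 0 = w := by
  funext j; simp [suffix]

lemma suffix_add {AP : Type} (w : ℕ → Set AP) {a b c : ℕ} (h : a + b = c) :
    suffix (suffix w b) a = suffix w c := by
  rw [suffix_suffix, h]

lemma sat_F {AP : Type} (φ : LTL AP) (w : ℕ → Set AP) :
    Sat (LTL.F φ) w ↔ ∃ i, Sat φ (suffix w i) := by
  simp [LTL.F, Sat]

lemma sat_G {AP : Type} (φ : LTL AP) (w : ℕ → Set AP) :
    Sat (LTL.G φ) w ↔ ∀ i, Sat φ (suffix w i) := by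
  simp only [LTL.G, LTL.F, Sat]
  constructor
  · intro hs i
    by_contra hc
    exact hs ⟨i, hc, by simp⟩
  · rintro hs ⟨i, hi, _⟩
    exact hi (hs i)

lemma pe_shift {AP : Type} {μ : LTL AP} (h : PureEventuality μ) :
    ∀ (w : ℕ → Set AP) (k : ℕ), Sat μ (suffix w k) → Sat μ w := by
  induction h with
  | fin φ =>
      intro w k hs
      rw [sat_F] at hs ⊢
      obtain ⟨i, hi⟩ := hs
      exact ⟨i + k, by rwa [suffix_suffix] at hi⟩
  | or h1 h2 ih1 ih2 =>
      intro w k hs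
      rcases hs with h | h
      · exact Or.inl (ih1 w k h)
      · exact Or.inr (ih2 w k h)
  | and h1 h2 ih1 ih2 =>
      intro w k hs
      exact ⟨ih1 w k hs.1, ih2 w k hs.2⟩
  | next h ih =>
      intro w k hs
      simp only [Sat] at hs ⊢
      rw [suffix_suffix] at hs
      exact ih (suffix w 1) k (by rwa [suffix_add w (by omega : k + 1 = 1 + k)])
  | untl φ h ih =>
      intro w k hs
      simp only [Sat] at hs ⊢
      obtain ⟨i, hi, _⟩ := hs
      rw [suffix_suffix] at hi
      refine ⟨0, ?_, by omega⟩
      rw [suffix_zero]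
      exact ih w (i + k) hi
  | rel h1 h2 ih1 ih2 =>
      intro w k hs
      simp only [LTL.R, Sat] at hs ⊢
      rintro ⟨i, hi2, hi1⟩
      apply hs
      by_cases hik : k ≤ i
      · refine ⟨i - k, ?_, ?_⟩
        · rwa [suffix_add w (by omega : i - k + k = i)]
        · intro j hj
          rw [suffix_suffix]
          exact hi1 (j + k) (by omega)
      · refine ⟨0, ?_, by omega⟩
        rw [suffix_zero]
        intro hsat
        apply hi2
        apply ih2 (suffix w i) (k - i)
        rwa [suffix_add w (by omega : k - i + i = k)]
  | glob h ih =>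
      intro w k hs
      rw [sat_G] at hs ⊢
      intro i
      apply ih (suffix w i) k
      rw [suffix_add w (by omega : k + i = i + k)]
      have := hs i
      rwa [suffix_suffix] at this

lemma pu_shift {AP : Type} {ν : LTL AP} (h : PureUniversality ν) :
    ∀ (w : ℕ → Set AP) (k : ℕ), Sat ν w → Sat ν (suffix w k) := by
  induction h with
  | glob φ =>
      intro w k hs
      rw [sat_G] at hs ⊢
      intro i
      rw [suffix_suffix]
      exact hs (i + k)
  | or h1 h2 ih1 ih2 =>
      intro w k hs
      rcases hs with h | h
      · exact Or.inl (ih1 w k h)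
      · exact Or.inr (ih2 w k h)
  | and h1 h2 ih1 ih2 =>
      intro w k hs
      exact ⟨ih1 w k hs.1, ih2 w k hs.2⟩
  | next h ih =>
      intro w k hs
      simp only [Sat] at hs ⊢
      rw [suffix_suffix, ← suffix_add w (by omega : k + 1 = 1 + k)]
      exact ih (suffix w 1) k hs
  | untl h1 h2 ih1 ih2 =>
      intro w k hs
      simp only [Sat] at hs ⊢
      obtain ⟨i, hi, hj⟩ := hs
      by_cases hik : k ≤ i
      · refine ⟨i - k, ?_, ?_⟩
        · rwa [suffix_add w (by omega : i - k + k = i)]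
        · intro j hjlt
          rw [suffix_suffix]
          exact hj (j + k) (by omega)
      · refine ⟨0, ?_, by omega⟩
        rw [suffix_zero, ← suffix_add w (by omega : (k - i) + i = k)]
        exact ih2 (suffix w i) (k - i) hi
  | rel φ h ih =>
      rename_i ν₀
      intro w k hs
      simp only [LTL.R, Sat] at hs ⊢
      rintro ⟨i, hi2, hi1⟩
      apply hs
      rw [suffix_suffix] at hi2
      have hnot : ∀ m ≤ i + k, ¬ Sat ν₀ (suffix w m) := by
        intro m hm hsat
        apply hi2
        rw [← suffix_add w (by omega : (i + k - m) + m = i + k)]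
        exact ih (suffix w m) (i + k - m) hsat
      by_cases hex : ∃ j, j < k ∧ Sat φ (suffix w j)
      · classical
        refine ⟨Nat.find hex, hnot _ (by have := (Nat.find_spec hex).1; omega), ?_⟩
        intro j hj
        have := Nat.find_min hex hj
        push_neg at this
        exact fun hsat => absurd hsat
          (this (by have := (Nat.find_spec hex).1; omega))
      · push_neg at hex
        refine ⟨i + k, hnot _ le_rfl, ?_⟩
        intro j hj
        by_cases hjk : j < k
        · exact hex j hjk
        · intro hsat
          apply hi1 (j - k) (by omega)
          rwa [suffix_add w (by omega : j - k + k = j)]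
  | fin h ih =>
      intro w k hs
      rw [sat_F] at hs ⊢
      obtain ⟨i, hi⟩ := hs
      refine ⟨i, ?_⟩
      rw [suffix_suffix, ← suffix_add w (by omega : k + i = i + k)]
      exact ih (suffix w i) k hi

lemma alt_invariant {AP : Type} {ξ : LTL AP} (h : Alternating ξ) :
    ∀ (w : ℕ → Set AP) (k : ℕ), Sat ξ w ↔ Sat ξ (suffix w k) := by
  induction h with
  | globEv hμ =>
      intro w k
      rw [sat_G, sat_G]
      constructor
      · intro hs i; rw [suffix_suffix]; exact hs (i + k)
      · intro hs i
        rcases le_or_gt k i with hle | hlt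
        · have := hs (i - k)
          rwa [suffix_add w (by omega : i - k + k = i)] at this
        · apply pe_shift hμ (suffix w i) (k - i)
          rw [suffix_add w (by omega : k - i + i = k)]
          have := hs 0
          rwa [suffix_add w (by omega : 0 + k = k)] at this
  | finUniv hν =>
      intro w k
      rw [sat_F, sat_F]
      constructor
      · rintro ⟨i, hi⟩
        refine ⟨i, ?_⟩
        rw [suffix_suffix, ← suffix_add w (by omega : k + i = i + k)]
        exact pu_shift hν (suffix w i) k hi
      · rintro ⟨i, hi⟩
        rw [suffix_suffix] at hi
        exact ⟨i + k, hi⟩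
  | or h1 h2 ih1 ih2 =>
      intro w k
      exact or_congr (ih1 w k) (ih2 w k)
  | and h1 h2 ih1 ih2 =>
      intro w k
      exact and_congr (ih1 w k) (ih2 w k)
  | next h ih =>
      intro w k
      simp only [Sat]
      rw [ih (suffix w 1) k,
        suffix_add w (rfl : k + 1 = k + 1),
        suffix_add w (by omega : 1 + k = k + 1)]
  | untl φ h ih =>
      intro w k
      have tr : ∀ (v : ℕ → Set AP) (a b : ℕ),
          Sat _ (suffix v a) → Sat _ (suffix v b) :=
        fun v a b hv => (ih v b).mp ((ih v a).mpr hv)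
      simp only [Sat]
      constructor
      · rintro ⟨i, hi, _⟩
        refine ⟨0, ?_, by omega⟩
        rw [suffix_zero, ← suffix_add w (by omega : 0 + k = k), suffix_zero]
        exact tr w i k hi
      · rintro ⟨i, hi, _⟩
        refine ⟨0, ?_, by omega⟩
        rw [suffix_zero]
        rw [suffix_suffix] at hi
        exact (ih w (i + k)).mpr hi
  | rel φ h ih =>
      rename_i ξ₀
      intro w k
      simp only [LTL.R, Sat]
      have key : ∀ (v : ℕ → Set AP),
          (¬ ∃ i, (¬ Sat ξ₀ (suffix v i)) ∧ ∀ j < i, ¬ Sat φ (suffix v j)) ↔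
            Sat ξ₀ v := by
        intro v
        constructor
        · intro hs
          by_contra hc
          exact hs ⟨0, by rwa [suffix_zero], by omega⟩
        · rintro hs ⟨i, hi, _⟩
          exact hi ((ih v i).mp hs)
      rw [key w, key (suffix w k)]
      exact ih w k
  | fin h ih =>
      intro w k
      have tr : ∀ (v : ℕ → Set AP) (a b : ℕ),
          Sat _ (suffix v a) → Sat _ (suffix v b) :=
        fun v a b hv => (ih v b).mp ((ih v a).mpr hv)
      rw [sat_F, sat_F]
      constructor
      · rintro ⟨i, hi⟩
        refine ⟨0, ?_⟩
        rw [suffix_add w (by omega : 0 + k = k)]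
        exact tr w i k hi
      · rintro ⟨i, hi⟩
        rw [suffix_suffix] at hi
        exact ⟨i + k, hi⟩
  | glob h ih =>
      intro w k
      have tr : ∀ (v : ℕ → Set AP) (a b : ℕ),
          Sat _ (suffix v a) → Sat _ (suffix v b) :=
        fun v a b hv => (ih v b).mp ((ih v a).mpr hv)
      rw [sat_G, sat_G]
      constructor
      · intro hs i
        rw [suffix_suffix]
        exact tr w 0 (i + k) (by rw [suffix_zero]; exact tr w 0 0 (by
          rw [suffix_zero]; exact (by have := hs 0; rwa [suffix_zero] at this)))
      · intro hs i
        have := hs 0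
        rw [suffix_add w (by omega : 0 + k = k)] at this
        exact tr w k i this

theorem release_suspension_identity :
    ∀ (AP : Type) (φ₁ φ₂ : LTL AP), Alternating φ₁ →
      ∀ w : ℕ → Set AP,
        Sat (LTL.R φ₁ φ₂) w ↔
          Sat (LTL.and φ₂ (LTL.or (LTL.next φ₁) (LTL.next (LTL.R φ₁ φ₂)))) w := by
  intro AP φ₁ φ₂ halt w
  have inv := alt_invariant halt
  simp only [Sat, LTL.R]
  by_cases h1 : Sat φ₁ w
  · constructor
    · intro hs
      refine ⟨?_, Or.inl ((inv w 1).mp h1)⟩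
      by_contra h2
      exact hs ⟨0, by rwa [suffix_zero], by omega⟩
    · rintro ⟨h2, _⟩ ⟨i, hi2, hi1⟩
      rcases Nat.eq_zero_or_pos i with rfl | hpos
      · exact hi2 (by rwa [suffix_zero])
      · exact hi1 0 hpos (by rw [suffix_zero]; exact h1)
  · have hnone : ∀ k, ¬ Sat φ₁ (suffix w k) := fun k hk => h1 ((inv w k).mpr hk)
    have lhs : (¬ ∃ i, ¬ Sat φ₂ (suffix w i) ∧ ∀ j < i, ¬ Sat φ₁ (suffix w j)) ↔
        ∀ i, Sat φ₂ (suffix w i) := by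
      constructor
      · intro hs i
        by_contra hc
        exact hs ⟨i, hc, fun j _ => hnone j⟩
      · rintro hs ⟨i, hi2, _⟩
        exact hi2 (hs i)
    have rhs : (¬ ∃ i, ¬ Sat φ₂ (suffix (suffix w 1) i) ∧
          ∀ j < i, ¬ Sat φ₁ (suffix (suffix w 1) j)) ↔
        ∀ i, Sat φ₂ (suffix w (i + 1)) := by
      constructor
      · intro hs i
        by_contra hc
        exact hs ⟨i, by rwa [suffix_suffix],
          fun j _ => by rw [suffix_suffix]; exact hnone (j + 1)⟩
      · rintro hs ⟨i, hi2, _⟩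
        exact hi2 (by rw [suffix_suffix]; exact hs i)
    rw [lhs, rhs]
    constructor
    · intro hs
      refine ⟨by have := hs 0; rwa [suffix_zero] at this,
        Or.inr (fun i => hs (i + 1))⟩
    · rintro ⟨h2, h3⟩ i
      rcases h3 with h3 | h3
      · exact absurd h3 (hnone 1)
      · rcases Nat.eq_zero_or_pos i with rfl | hpos
        · rwa [suffix_zero]
        · have := h3 (i - 1)
          rwa [show i - 1 + 1 = i by omega] at this
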